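/- arXiv:2105.10658 — 5 statements merged into one kernel-verified Lean document; each statement's English description precedes it below -/
import Mathlib

section
/- Let A be a self-adjoint unitary on H_A, B a self-adjoint unitary on H_B, and ψ ∈ H_A ⊗ H_B a unit vector with ⟨ψ, (A ⊗ B)ψ⟩ = 1. Let S = Supp_A(ψ) be the A-support of ψ. Then A maps S into S and also maps the orthogonal complement of S into itself. -/
/-!
Since `A ⊗ B` is unitary and `ψ` is a unit vector, `⟨ψ, (A ⊗ B)ψ⟩ = 1` forces `(A ⊗ B)ψ = ψ`,
that is `∑ λᵢ vᵢ ⊗ wᵢ = ∑ λᵢ Avᵢ ⊗ Bwᵢ`, where the `Bwᵢ` are again orthonormal. Pairing both sides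
with `x ⊗ Bwₖ` for `x ⊥ S` gives `λₖ ⟨x, Avₖ⟩ = 0`, so `Avₖ ∈ Sᗮᗮ = S`. As `A` is self-adjoint,
invariance of `S` implies invariance of `Sᗮ`.
-/

open Kronecker

/-- Action of a matrix on a Euclidean-space vector. -/
noncomputable def act {ι κ : Type*} [Fintype ι] (M : Matrix κ ι ℂ) (x : EuclideanSpace ℂ ι) :
    EuclideanSpace ℂ κ := WithLp.toLp 2 (fun k => ∑ j, M k j * x j)

/-- Elementary tensor of two Euclidean-space vectors. -/
noncomputable def tp {ι κ : Type*} (v : EuclideanSpace ℂ ι) (w : EuclideanSpace ℂ κ) :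
    EuclideanSpace ℂ (ι × κ) := WithLp.toLp 2 (fun p : ι × κ => v p.1 * w p.2)

section

variable {ι κ ι' κ' τ : Type*} [Fintype ι] [Fintype κ]

theorem act_eq_toLpLin [DecidableEq ι] (M : Matrix κ' ι ℂ) : act M = Matrix.toLpLin 2 2 M := rfl

theorem act_eq_toEuclideanCLM [DecidableEq ι] (M : Matrix ι ι ℂ) :
    act M = Matrix.toEuclideanCLM (𝕜 := ℂ) M := rfl

theorem act_kronecker_tp (M : Matrix ι' ι ℂ) (N : Matrix κ' κ ℂ) (a : EuclideanSpace ℂ ι)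
    (b : EuclideanSpace ℂ κ) : act (M ⊗ₖ N) (tp a b) = tp (act M a) (act N b) := by
  ext p
  simp only [act, tp, PiLp.toLp_apply, Matrix.kroneckerMap_apply, Fintype.sum_prod_type,
    Finset.sum_mul_sum]
  exact Finset.sum_congr rfl fun i _ => Finset.sum_congr rfl fun j _ => by ring

theorem act_kronecker_sum_smul_tp [Fintype τ] (M : Matrix ι' ι ℂ) (N : Matrix κ' κ ℂ)
    (c : τ → ℂ) (a : τ → EuclideanSpace ℂ ι) (b : τ → EuclideanSpace ℂ κ) :
    act (M ⊗ₖ N) (∑ i, c i • tp (a i) (b i)) = ∑ i, c i • tp (act M (a i)) (act N (b i)) := by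
  classical
  rw [act_eq_toLpLin, map_sum]
  refine Finset.sum_congr rfl fun i _ => ?_
  rw [map_smul, ← act_eq_toLpLin, act_kronecker_tp]

theorem inner_tp_tp (x a : EuclideanSpace ℂ ι) (y b : EuclideanSpace ℂ κ) :
    inner ℂ (tp x y) (tp a b) = inner ℂ x a * inner ℂ y b := by
  simp only [tp, PiLp.inner_apply, RCLike.inner_apply, Fintype.sum_prod_type,
    Finset.sum_mul_sum, map_mul]
  exact Finset.sum_congr rfl fun i _ => Finset.sum_congr rfl fun j _ => by ring

theorem mem_span_of_sum_smul_tp_eq [Fintype τ] {v a : τ → EuclideanSpace ℂ ι}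
    {w b : τ → EuclideanSpace ℂ κ} {c d : τ → ℂ} (hb : Orthonormal ℂ b)
    (heq : ∑ i, c i • tp (v i) (w i) = ∑ i, d i • tp (a i) (b i)) {k : τ} (hk : d k ≠ 0) :
    a k ∈ Submodule.span ℂ (Set.range v) := by
  classical
  rw [← (Submodule.span ℂ (Set.range v)).orthogonal_orthogonal, Submodule.mem_orthogonal]
  intro x hx
  have hv : ∀ i, inner ℂ x (v i) = 0 := fun i =>
    Submodule.inner_left_of_mem_orthogonal (Submodule.subset_span (Set.mem_range_self i)) hx
  have hpair := congrArg (inner ℂ (tp x (b k))) heq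
  simp only [inner_sum, inner_smul_right, inner_tp_tp, hv, orthonormal_iff_ite.mp hb,
    zero_mul, mul_zero, mul_ite, mul_one, Finset.sum_const_zero, Finset.sum_ite_eq,
    Finset.mem_univ, if_true] at hpair
  exact (mul_eq_zero.mp hpair.symm).resolve_left hk

theorem IsSelfAdjoint.mem_unitary_of_mul_self {R : Type*} [Monoid R] [StarMul R] {u : R}
    (hu : IsSelfAdjoint u) (h : u * u = 1) : u ∈ unitary R := by
  rw [Unitary.mem_iff, hu.star_eq]
  exact ⟨h, h⟩

theorem Orthonormal.comp_of_mem_unitary {E : Type*} [NormedAddCommGroup E]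
    [InnerProductSpace ℂ E] [CompleteSpace E] {u : E →L[ℂ] E} (hu : u ∈ unitary (E →L[ℂ] E))
    {w : τ → E} (hw : Orthonormal ℂ w) : Orthonormal ℂ (u ∘ w) := by
  classical
  rw [orthonormal_iff_ite] at hw ⊢
  intro i j
  simp only [Function.comp_apply, ContinuousLinearMap.inner_map_map_of_mem_unitary hu, hw]

end

theorem stmt2_general {m n : ℕ} (A : Matrix (Fin m) (Fin m) ℂ) (B : Matrix (Fin n) (Fin n) ℂ)
    (hA : A.IsHermitian) (hA2 : A * A = 1)
    (hB : B.IsHermitian) (hB2 : B * B = 1)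
    {ι : Type*} [Fintype ι] (lam : ι → ℝ) (hlam : ∀ i, 0 < lam i)
    (v : ι → EuclideanSpace ℂ (Fin m)) (w : ι → EuclideanSpace ℂ (Fin n))
    (hw : Orthonormal ℂ w)
    (ψ : EuclideanSpace ℂ (Fin m × Fin n))
    (hψ : ψ = ∑ i, (lam i : ℂ) • tp (v i) (w i))
    (hunit : ‖ψ‖ = 1)
    (h : (inner ℂ ψ (act (A ⊗ₖ B) ψ) : ℂ) = 1) :
    (∀ x ∈ Submodule.span ℂ (Set.range v), act A x ∈ Submodule.span ℂ (Set.range v)) ∧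
    (∀ x ∈ (Submodule.span ℂ (Set.range v))ᗮ, act A x ∈ (Submodule.span ℂ (Set.range v))ᗮ) := by
  set S := Submodule.span ℂ (Set.range v)
  have hAu := hA.isSelfAdjoint.mem_unitary_of_mul_self hA2
  have hBu := hB.isSelfAdjoint.mem_unitary_of_mul_self hB2
  have hKu :=
    Unitary.map_mem (Matrix.toEuclideanCLM (𝕜 := ℂ)) (Matrix.kronecker_mem_unitary hAu hBu)
  have hfix : ψ = act (A ⊗ₖ B) ψ := (inner_eq_one_iff_of_norm_eq_one hunit
    (by rw [act_eq_toEuclideanCLM, ContinuousLinearMap.norm_map_of_mem_unitary hKu, hunit])).mp h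
  have hexpand : ∑ i, (lam i : ℂ) • tp (v i) (w i)
      = ∑ i, (lam i : ℂ) • tp (act A (v i)) (act B (w i)) := by
    rw [← hψ, hfix, hψ, act_kronecker_sum_smul_tp]
  have hBw : Orthonormal ℂ fun i => act B (w i) := by
    rw [act_eq_toEuclideanCLM]
    exact hw.comp_of_mem_unitary (Unitary.map_mem Matrix.toEuclideanCLM hBu)
  have hAv (k : ι) : act A (v k) ∈ S :=
    mem_span_of_sum_smul_tp_eq hBw hexpand (by exact_mod_cast (hlam k).ne')
  have hAS : S ∈ Module.End.invtSubmodule (Matrix.toEuclideanCLM (𝕜 := ℂ) A).toLinearMap :=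
    Submodule.span_le.mpr (Set.range_subset_iff.mpr hAv)
  have hASperp : Sᗮ ∈ Module.End.invtSubmodule (Matrix.toEuclideanCLM (𝕜 := ℂ) A).toLinearMap :=
    ContinuousLinearMap.orthogonal_mem_invtSubmodule
      (by rwa [← ContinuousLinearMap.star_eq_adjoint, ← map_star, hA.isSelfAdjoint.star_eq])
  rw [Module.End.mem_invtSubmodule_iff_forall_mem_of_mem] at hAS hASperp
  exact ⟨hAS, hASperp⟩

/-- for self-adjoint unitaries `A`, `B` and a unit vector `ψ` with
`⟨ψ, (A ⊗ B)ψ⟩ = 1`, the operator `A` maps `S = Supp_A(ψ)` (the span of the A-side Schmidt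
vectors) into `S`, and maps `Sᗮ` into `Sᗮ`. -/
theorem stmt2 {m n : ℕ} (A : Matrix (Fin m) (Fin m) ℂ) (B : Matrix (Fin n) (Fin n) ℂ)
    (hA : A.IsHermitian) (hA2 : A * A = 1)
    (hB : B.IsHermitian) (hB2 : B * B = 1)
    {ι : Type*} [Fintype ι] (lam : ι → ℝ) (hlam : ∀ i, 0 < lam i)
    (v : ι → EuclideanSpace ℂ (Fin m)) (w : ι → EuclideanSpace ℂ (Fin n))
    (hv : Orthonormal ℂ v) (hw : Orthonormal ℂ w)
    (ψ : EuclideanSpace ℂ (Fin m × Fin n))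
    (hψ : ψ = ∑ i, (lam i : ℂ) • tp (v i) (w i))
    (hunit : ‖ψ‖ = 1)
    (h : (inner ℂ ψ (act (A ⊗ₖ B) ψ) : ℂ) = 1) :
    (∀ x ∈ Submodule.span ℂ (Set.range v), act A x ∈ Submodule.span ℂ (Set.range v)) ∧
    (∀ x ∈ (Submodule.span ℂ (Set.range v))ᗮ, act A x ∈ (Submodule.span ℂ (Set.range v))ᗮ) :=
  stmt2_general A B hA hA2 hB hB2 lam hlam v w hw ψ hψ hunit h
end

section
/- Let A₁,…,A₉ be self-adjoint unitaries on a Hilbert space H such that operators sharing a row or column of the 3×3 magic square commute, all three row products equal I, and the first two column products A₁A₄A₇ = A₂A₅A₈ = I. Then the operator E := A₃A₆A₉ commutes with every Aᵢ, i ∈ {1,…,9}. -/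
/-!
Write `a, b, c, d` for the top-left `2 × 2` block. Since the entries are commuting involutions
along rows and columns, the row and column relations force
`A₃ = ab`, `A₆ = cd`, `A₇ = ac`, `A₈ = bd` and `A₉ = A₇A₈`. The commutation of `A₆` with `A₉`
then rewrites `E = ab · cd · ac · bd` as `(abc)²`, which commutes with `a`; exchanging the first
two rows gives `E = (cda)²`, which commutes with `c`. Every other entry is a product of `a`, `c`
and entries of the third column, which commute with `E` because `E` is their product.
-/

section Monoid

variable {M : Type*} [Monoid M]

theorem eq_mul_of_mul_mul_eq_one_of_mul_self {x y z : M} (h : x * y * z = 1) (hz : z * z = 1) :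
    z = x * y :=
  calc z = x * y * z * z := by rw [h, one_mul]
    _ = x * y := by rw [mul_assoc (x * y), hz, mul_one]

theorem Commute.of_mul_self_of_mul_right {x u v : M} (hu : u * u = 1) (hxu : Commute x u)
    (hxuv : Commute x (u * v)) : Commute x v := by
  simpa only [← mul_assoc, hu, one_mul] using hxu.mul_right hxuv

theorem mul_mul_mul_eq_sq_of_commute {a b c d : M} (hc : c * c = 1) (hd : d * d = 1)
    (hac : Commute a c) (hcd : Commute c d) (h : Commute (c * d) (a * c * (b * d))) :
    a * b * (c * d) * (a * c * (b * d)) = (a * b * c) ^ 2 := by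
  have hcdX : c * d * (a * c * (b * d)) = a * c * (b * c) := by
    rw [h.eq]
    calc a * c * (b * d) * (c * d) = a * c * (b * (d * (d * c))) := by
          rw [hcd.eq]; simp only [mul_assoc]
      _ = a * c * (b * c) := by rw [← mul_assoc d, hd, one_mul]
  have hX : a * c * (b * d) = d * (a * b * c) :=
    calc a * c * (b * d) = d * c * (c * d * (a * c * (b * d))) := by
          simp only [← mul_assoc, mul_assoc d c c, hc, mul_one, hd, one_mul]
      _ = d * (c * a * c * (b * c)) := by rw [hcdX]; simp only [mul_assoc]
      _ = d * (a * b * c) := by rw [← hac.eq, mul_assoc a c c, hc, mul_one, mul_assoc a b]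
  rw [hX, sq]
  simp only [mul_assoc, ← mul_assoc d d, hd, one_mul]

theorem Commute.sq_mul_mul_self_left {a b c : M} (hab : Commute a b) (hac : Commute a c) :
    Commute ((a * b * c) ^ 2) a :=
  (((Commute.refl a).mul_right hab).mul_right hac).symm.pow_left 2

theorem commute_colProd_two_of_magicSquare (A : Fin 3 → Fin 3 → M)
    (hsq : ∀ i j, A i j * A i j = 1)
    (hrowcomm : ∀ r c c', Commute (A r c) (A r c'))
    (hcolcomm : ∀ c r r', Commute (A r c) (A r' c))
    (hrow : ∀ r, A r 0 * A r 1 * A r 2 = 1)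
    (hcol0 : A 0 0 * A 1 0 * A 2 0 = 1)
    (hcol1 : A 0 1 * A 1 1 * A 2 1 = 1) (i j : Fin 3) :
    Commute (A 0 2 * A 1 2 * A 2 2) (A i j) := by
  have hrow2 : ∀ r, A r 2 = A r 0 * A r 1 := fun r =>
    eq_mul_of_mul_mul_eq_one_of_mul_self (hrow r) (hsq r 2)
  have h20 : A 2 0 = A 0 0 * A 1 0 := eq_mul_of_mul_mul_eq_one_of_mul_self hcol0 (hsq 2 0)
  have h21 : A 2 1 = A 0 1 * A 1 1 := eq_mul_of_mul_mul_eq_one_of_mul_self hcol1 (hsq 2 1)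
  have hcol2comm : ∀ r r', Commute (A r 0 * A r 1) (A r' 0 * A r' 1) := fun r r' => by
    simpa only [hrow2] using hcolcomm 2 r r'
  have hac := hcolcomm 0 0 1
  have hbd := hcolcomm 1 0 1
  have hA22 : A 2 2 = A 0 0 * A 1 0 * (A 0 1 * A 1 1) := by rw [hrow2, h20, h21]
  have hA22' : A 2 2 = A 1 0 * A 0 0 * (A 1 1 * A 0 1) := by rw [hA22, hac.eq, hbd.eq]
  have hExp : A 0 2 * A 1 2 * A 2 2 =
      A 0 0 * A 0 1 * (A 1 0 * A 1 1) * (A 0 0 * A 1 0 * (A 0 1 * A 1 1)) := by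
    rw [hrow2 0, hrow2 1, hA22]
  set E := A 0 2 * A 1 2 * A 2 2
  have hE₀ : E = (A 0 0 * A 0 1 * A 1 0) ^ 2 :=
    hExp.trans <| mul_mul_mul_eq_sq_of_commute (hsq 1 0) (hsq 1 1) hac (hrowcomm 1 0 1)
      (hA22 ▸ hrow2 2 ▸ hcol2comm 1 2)
  have hE₁ : E = (A 1 0 * A 1 1 * A 0 0) ^ 2 := by
    rw [hExp, (hcol2comm 0 1).eq, hac.eq, hbd.eq]
    exact mul_mul_mul_eq_sq_of_commute (hsq 0 0) (hsq 0 1) hac.symm (hrowcomm 0 0 1)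
      (hA22' ▸ hrow2 2 ▸ hcol2comm 0 2)
  have hcol2 : ∀ r, Commute E (A r 2) := fun r =>
    ((hcolcomm 2 0 r).mul_left (hcolcomm 2 1 r)).mul_left (hcolcomm 2 2 r)
  have hrow_of_col0 : ∀ r, Commute E (A r 0) → ∀ j, Commute E (A r j) := fun r hr0 j => by
    have hr1 : Commute E (A r 1) := hr0.of_mul_self_of_mul_right (hsq r 0) (hrow2 r ▸ hcol2 r)
    fin_cases j
    exacts [hr0, hr1, hcol2 r]
  have hrow0 := hrow_of_col0 0 (hE₀ ▸ Commute.sq_mul_mul_self_left (hrowcomm 0 0 1) hac)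
  have hrow1 := hrow_of_col0 1 (hE₁ ▸ Commute.sq_mul_mul_self_left (hrowcomm 1 0 1) hac.symm)
  fin_cases i
  · exact hrow0 j
  · exact hrow1 j
  · fin_cases j
    exacts [h20 ▸ (hrow0 0).mul_right (hrow1 0), h21 ▸ (hrow0 1).mul_right (hrow1 1), hcol2 2]

end Monoid

theorem stmt7_general {H : Type*} [NormedAddCommGroup H] [InnerProductSpace ℂ H]
    (A : Fin 3 → Fin 3 → (H →L[ℂ] H))
    (hsq : ∀ i j, A i j * A i j = 1)
    (hrowcomm : ∀ r c c', Commute (A r c) (A r c'))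
    (hcolcomm : ∀ c r r', Commute (A r c) (A r' c))
    (hrow : ∀ r, A r 0 * A r 1 * A r 2 = 1)
    (hcol0 : A 0 0 * A 1 0 * A 2 0 = 1)
    (hcol1 : A 0 1 * A 1 1 * A 2 1 = 1) :
    ∀ i j, Commute (A 0 2 * A 1 2 * A 2 2) (A i j) :=
  commute_colProd_two_of_magicSquare A hsq hrowcomm hcolcomm hrow hcol0 hcol1

/-- magic-square operators (`A i j` sits in row `i`, column `j`): self-adjoint
unitaries, same row/column entries commute, all row products equal `I`, and the first two
column products equal `I`. Then `E := A₃A₆A₉` commutes with every `Aᵢ`. -/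
theorem stmt7 {H : Type*} [NormedAddCommGroup H] [InnerProductSpace ℂ H] [CompleteSpace H]
    (A : Fin 3 → Fin 3 → (H →L[ℂ] H))
    (hsa : ∀ i j, IsSelfAdjoint (A i j))
    (hsq : ∀ i j, A i j * A i j = 1)
    (hrowcomm : ∀ r c c', Commute (A r c) (A r c'))
    (hcolcomm : ∀ c r r', Commute (A r c) (A r' c))
    (hrow : ∀ r, A r 0 * A r 1 * A r 2 = 1)
    (hcol0 : A 0 0 * A 1 0 * A 2 0 = 1)
    (hcol1 : A 0 1 * A 1 1 * A 2 1 = 1) :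
    ∀ i j, Commute (A 0 2 * A 1 2 * A 2 2) (A i j) :=
  stmt7_general A hsq hrowcomm hcolcomm hrow hcol0 hcol1
end

section
/- Let A₁,…,A₉ be self-adjoint unitaries satisfying the magic-square commutation relations (operators in the same row/column commute), all row products equal to I, the column products A₁A₄A₇ = A₂A₅A₈ = I, and additionally A₃A₆A₉ = I. Then A₂ commutes with A₄, and A₁ commutes with A₅; consequently A₁, A₂, A₄, A₅ generate a representation of (Z/2Z)^4. -/
/-!
The first two row relations and the first two column relations express the third entry of
each of these lines through the upper-left `2 × 2` block `a b / c d`: `A₃ = b a`, `A₆ = d c`,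
`A₇ = c a`, `A₈ = d b`. Computing `A₉` from the third row gives `d b c a`, and from the third
column `d c b a`; cancelling `d` and `a` yields `b c = c b`. Since `A₇` and `A₈` commute, also
`c a d b = d c b a = c d a b`, and cancelling `c` and `b` yields `a d = d a`. Now `a, b, c, d`
are pairwise commuting involutions, and every such quadruple is the image of the standard
generators of `(ℤ/2ℤ)⁴`.
-/

section Involution

variable {M : Type*} [Monoid M] {x y z : M}

theorem isUnit_of_mul_self_eq_one (hx : x * x = 1) : IsUnit x :=
  ⟨⟨x, x, hx, hx⟩, rfl⟩

theorem eq_mul_of_mul_mul_eq_one (hx : x * x = 1) (hy : y * y = 1) (h : x * y * z = 1) :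
    z = y * x :=
  calc z = y * (x * x) * y * z := by rw [hx, mul_one, hy, one_mul]
    _ = y * x * (x * y * z) := by simp only [mul_assoc]
    _ = y * x := by rw [h, mul_one]

def zmodTwoHom (x : M) (hx : x * x = 1) : ZMod 2 →+ Additive M where
  toFun k := Additive.ofMul (x ^ k.val)
  map_zero' := by simp
  map_add' k l := by
    rw [ZMod.val_add, ← pow_eq_pow_mod _ (by rwa [pow_two]), pow_add]
    rfl

@[simp]
theorem zmodTwoHom_one (hx : x * x = 1) : zmodTwoHom x hx 1 = Additive.ofMul x := by
  simp [zmodTwoHom, ZMod.val_one]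

open scoped IsMulCommutative in
theorem exists_monoidHom_zmod_two_pow_four_of_commute {a b c d : M}
    (ha : a * a = 1) (hb : b * b = 1) (hc : c * c = 1) (hd : d * d = 1)
    (hab : Commute a b) (hac : Commute a c) (had : Commute a d)
    (hbc : Commute b c) (hbd : Commute b d) (hcd : Commute c d) :
    ∃ φ : Multiplicative (ZMod 2 × ZMod 2 × ZMod 2 × ZMod 2) →* M,
      φ (.ofAdd (1, 0, 0, 0)) = a ∧ φ (.ofAdd (0, 1, 0, 0)) = b ∧
      φ (.ofAdd (0, 0, 1, 0)) = c ∧ φ (.ofAdd (0, 0, 0, 1)) = d := by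
  -- `AddMonoidHom.coprod` needs a commutative target: the commuting generators span one.
  let S := Submonoid.closure ({a, b, c, d} : Set M)
  have : IsMulCommutative S := Submonoid.isMulCommutative_closure M (by
    simp only [Set.mem_insert_iff, Set.mem_singleton_iff]
    rintro x (rfl | rfl | rfl | rfl) y (rfl | rfl | rfl | rfl) <;>
      first | rfl | assumption | exact Commute.symm ‹_›)
  let gen (x : M) (hx : x ∈ ({a, b, c, d} : Set M)) (hx2 : x * x = 1) : ZMod 2 →+ Additive S :=
    zmodTwoHom ⟨x, Submonoid.subset_closure hx⟩ (Subtype.ext hx2)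
  let ψ := (gen a (by simp) ha).coprod ((gen b (by simp) hb).coprod
    ((gen c (by simp) hc).coprod (gen d (by simp) hd)))
  refine ⟨S.subtype.comp (AddMonoidHom.toMultiplicativeLeft ψ), ?_⟩
  simp [ψ, gen]

theorem commute_of_mul_mul_eq_mul_mul {a b c d : M} (ha : a * a = 1) (hd : d * d = 1)
    (h : d * b * (c * a) = d * c * (b * a)) : Commute b c := by
  simp only [← mul_assoc] at h
  simp only [mul_assoc d] at h
  exact (isUnit_of_mul_self_eq_one ha).mul_right_cancel
    ((isUnit_of_mul_self_eq_one hd).mul_left_cancel h)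

theorem commute_of_mul_mul_eq_mul_mul_of_commute {a b c d : M} (hb : b * b = 1)
    (hc : c * c = 1) (hab : Commute a b) (hcd : Commute c d)
    (h : c * a * (d * b) = d * c * (b * a)) : Commute a d := by
  rw [← hcd.eq, ← hab.eq] at h
  simp only [← mul_assoc] at h
  simp only [mul_assoc c] at h
  exact (isUnit_of_mul_self_eq_one hb).mul_right_cancel
    ((isUnit_of_mul_self_eq_one hc).mul_left_cancel h)

end Involution

theorem magicSquare_commute {M : Type*} [Monoid M] {A : Fin 3 → Fin 3 → M}
    (hsq : ∀ i j, A i j * A i j = 1) (hrowcomm : ∀ r c c', Commute (A r c) (A r c'))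
    (hrow : ∀ r, A r 0 * A r 1 * A r 2 = 1) (hcol0 : A 0 0 * A 1 0 * A 2 0 = 1)
    (hcol1 : A 0 1 * A 1 1 * A 2 1 = 1) (hcol2 : A 0 2 * A 1 2 * A 2 2 = 1) :
    Commute (A 0 1) (A 1 0) ∧ Commute (A 0 0) (A 1 1) := by
  have h02 := eq_mul_of_mul_mul_eq_one (hsq 0 0) (hsq 0 1) (hrow 0)
  have h12 := eq_mul_of_mul_mul_eq_one (hsq 1 0) (hsq 1 1) (hrow 1)
  have h20 := eq_mul_of_mul_mul_eq_one (hsq 0 0) (hsq 1 0) hcol0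
  have h21 := eq_mul_of_mul_mul_eq_one (hsq 0 1) (hsq 1 1) hcol1
  have h22 : A 2 1 * A 2 0 = A 1 2 * A 0 2 :=
    (eq_mul_of_mul_mul_eq_one (hsq 2 0) (hsq 2 1) (hrow 2)).symm.trans
      (eq_mul_of_mul_mul_eq_one (hsq 0 2) (hsq 1 2) hcol2)
  rw [h02, h12, h20, h21] at h22
  have h2 := hrowcomm 2 0 1
  rw [h20, h21] at h2
  exact ⟨commute_of_mul_mul_eq_mul_mul (hsq 0 0) (hsq 1 1) h22,
    commute_of_mul_mul_eq_mul_mul_of_commute (hsq 0 1) (hsq 1 0) (hrowcomm 0 0 1) (hrowcomm 1 0 1)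
      (h2.eq.trans h22)⟩

theorem stmt8_general {H : Type*} [NormedAddCommGroup H] [InnerProductSpace ℂ H]
    (A : Fin 3 → Fin 3 → (H →L[ℂ] H))
    (hsq : ∀ i j, A i j * A i j = 1)
    (hrowcomm : ∀ r c c', Commute (A r c) (A r c'))
    (hcolcomm : ∀ c r r', Commute (A r c) (A r' c))
    (hrow : ∀ r, A r 0 * A r 1 * A r 2 = 1)
    (hcol0 : A 0 0 * A 1 0 * A 2 0 = 1)
    (hcol1 : A 0 1 * A 1 1 * A 2 1 = 1)
    (hcol2 : A 0 2 * A 1 2 * A 2 2 = 1) :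
    Commute (A 0 1) (A 1 0) ∧ Commute (A 0 0) (A 1 1) ∧
    ∃ φ : Multiplicative (ZMod 2 × ZMod 2 × ZMod 2 × ZMod 2) →* (H →L[ℂ] H),
      φ (Multiplicative.ofAdd (1, 0, 0, 0)) = A 0 0 ∧
      φ (Multiplicative.ofAdd (0, 1, 0, 0)) = A 0 1 ∧
      φ (Multiplicative.ofAdd (0, 0, 1, 0)) = A 1 0 ∧
      φ (Multiplicative.ofAdd (0, 0, 0, 1)) = A 1 1 := by
  obtain ⟨hbc, had⟩ := magicSquare_commute hsq hrowcomm hrow hcol0 hcol1 hcol2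
  exact ⟨hbc, had, exists_monoidHom_zmod_two_pow_four_of_commute (hsq 0 0) (hsq 0 1) (hsq 1 0)
    (hsq 1 1) (hrowcomm 0 0 1) (hcolcomm 0 0 1) had hbc (hcolcomm 1 0 1) (hrowcomm 1 0 1)⟩

/-- magic-square operators (`A i j` in row `i`, column `j`) that are
self-adjoint unitaries with the same-row/column commutation relations, all row products
equal to `I`, the first two column products equal to `I`, and additionally
`A₃A₆A₉ = I`. Then `A₂` commutes with `A₄` and `A₁` commutes with `A₅`; consequently
`x₁ ↦ A₁, x₂ ↦ A₂, x₃ ↦ A₄, x₄ ↦ A₅` yields a representation of `(ℤ/2ℤ)⁴`. -/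
theorem stmt8 {H : Type*} [NormedAddCommGroup H] [InnerProductSpace ℂ H] [CompleteSpace H]
    (A : Fin 3 → Fin 3 → (H →L[ℂ] H))
    (hsa : ∀ i j, IsSelfAdjoint (A i j))
    (hsq : ∀ i j, A i j * A i j = 1)
    (hrowcomm : ∀ r c c', Commute (A r c) (A r c'))
    (hcolcomm : ∀ c r r', Commute (A r c) (A r' c))
    (hrow : ∀ r, A r 0 * A r 1 * A r 2 = 1)
    (hcol0 : A 0 0 * A 1 0 * A 2 0 = 1)
    (hcol1 : A 0 1 * A 1 1 * A 2 1 = 1)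
    (hcol2 : A 0 2 * A 1 2 * A 2 2 = 1) :
    Commute (A 0 1) (A 1 0) ∧ Commute (A 0 0) (A 1 1) ∧
    ∃ φ : Multiplicative (ZMod 2 × ZMod 2 × ZMod 2 × ZMod 2) →* (H →L[ℂ] H),
      φ (Multiplicative.ofAdd (1, 0, 0, 0)) = A 0 0 ∧
      φ (Multiplicative.ofAdd (0, 1, 0, 0)) = A 0 1 ∧
      φ (Multiplicative.ofAdd (0, 0, 1, 0)) = A 1 0 ∧
      φ (Multiplicative.ofAdd (0, 0, 0, 1)) = A 1 1 :=
  stmt8_general A hsq hrowcomm hcolcomm hrow hcol0 hcol1 hcol2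
end

section
/- For 0 ≤ ε, δ and unitaries A, B on a Hilbert space H with unit vector ψ such that Re⟨ψ, Aψ⟩ ≥ 1 − ε and Re⟨ψ, Bψ⟩ ≥ 1 − δ, it holds that Re⟨ψ, ABψ⟩ ≥ 1 − (√ε + √δ)². -/
/-!
For a unit vector `ψ` and a unitary `U`, `‖ψ - Uψ‖² = 2 - 2 Re⟨ψ, Uψ⟩`, so the hypotheses say
`‖ψ - Aψ‖ ≤ √(2ε)` and `‖ψ - Bψ‖ ≤ √(2δ)`. Since `ψ - ABψ = (ψ - Aψ) + A(ψ - Bψ)` and `A` is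
isometric, `‖ψ - ABψ‖ ≤ √2 (√ε + √δ)`; reading this back through the same identity for `AB`
gives the claim.
-/

open RCLike

theorem norm_sub_map_map_le {E F : Type*} [SeminormedAddCommGroup E] [FunLike F E E]
    [AddMonoidHomClass F E E] {f : F} (hf : ∀ z, ‖f z‖ = ‖z‖) (g : E → E) (x : E) :
    ‖x - f (g x)‖ ≤ ‖x - f x‖ + ‖x - g x‖ :=
  calc ‖x - f (g x)‖ = ‖(x - f x) + f (x - g x)‖ := by rw [map_sub]; abel_nf
    _ ≤ ‖x - f x‖ + ‖f (x - g x)‖ := norm_add_le _ _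
    _ = ‖x - f x‖ + ‖x - g x‖ := by rw [hf]

section Unitary

variable {𝕜 H : Type*} [RCLike 𝕜] [NormedAddCommGroup H] [InnerProductSpace 𝕜 H]
  [CompleteSpace H] {U : H →L[𝕜] H} {x : H}

theorem re_inner_apply_eq_of_mem_unitary (hU : U ∈ unitary (H →L[𝕜] H)) (hx : ‖x‖ = 1) :
    re (inner 𝕜 x (U x)) = 1 - ‖x - U x‖ ^ 2 / 2 := by
  rw [norm_sub_sq (𝕜 := 𝕜), ContinuousLinearMap.norm_map_of_mem_unitary hU, hx]
  ring

theorem norm_sub_apply_le_of_le_re_inner (hU : U ∈ unitary (H →L[𝕜] H)) (hx : ‖x‖ = 1)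
    {ε : ℝ} (h : 1 - ε ≤ re (inner 𝕜 x (U x))) : ‖x - U x‖ ≤ √2 * √ε := by
  rw [← Real.sqrt_mul zero_le_two]
  apply Real.le_sqrt_of_sq_le
  linarith [re_inner_apply_eq_of_mem_unitary hU hx]

end Unitary

theorem stmt10_general {H : Type*} [NormedAddCommGroup H] [InnerProductSpace ℂ H] [CompleteSpace H]
    (ε δ : ℝ)
    (A B : H →L[ℂ] H)
    (hA : A ∈ unitary (H →L[ℂ] H)) (hB : B ∈ unitary (H →L[ℂ] H))
    (ψ : H) (hψ : ‖ψ‖ = 1)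
    (h1 : 1 - ε ≤ (inner ℂ ψ (A ψ) : ℂ).re)
    (h2 : 1 - δ ≤ (inner ℂ ψ (B ψ) : ℂ).re) :
    1 - (Real.sqrt ε + Real.sqrt δ) ^ 2 ≤ (inner ℂ ψ ((A * B) ψ) : ℂ).re := by
  have hAψ := norm_sub_apply_le_of_le_re_inner hA hψ h1
  have hBψ := norm_sub_apply_le_of_le_re_inner hB hψ h2
  have hABψ : ‖ψ - (A * B) ψ‖ ≤ √2 * (√ε + √δ) := by
    calc ‖ψ - (A * B) ψ‖ ≤ ‖ψ - A ψ‖ + ‖ψ - B ψ‖ :=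
          norm_sub_map_map_le (ContinuousLinearMap.norm_map_of_mem_unitary hA) B ψ
      _ ≤ √2 * (√ε + √δ) := by linarith
  have hsq : ‖ψ - (A * B) ψ‖ ^ 2 ≤ 2 * (√ε + √δ) ^ 2 := by
    calc ‖ψ - (A * B) ψ‖ ^ 2 ≤ (√2 * (√ε + √δ)) ^ 2 := by gcongr
      _ = 2 * (√ε + √δ) ^ 2 := by rw [mul_pow, Real.sq_sqrt zero_le_two]
  have hre := re_inner_apply_eq_of_mem_unitary (mul_mem hA hB) hψ
  rw [RCLike.re_to_complex] at hre
  linarith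

/-- for `0 ≤ ε, δ`, unitaries `A, B` on a Hilbert space and a unit vector `ψ`
with `Re⟨ψ, Aψ⟩ ≥ 1 − ε` and `Re⟨ψ, Bψ⟩ ≥ 1 − δ`, one has
`Re⟨ψ, ABψ⟩ ≥ 1 − (√ε + √δ)²`. -/
theorem stmt10 {H : Type*} [NormedAddCommGroup H] [InnerProductSpace ℂ H] [CompleteSpace H]
    (ε δ : ℝ) (hε : 0 ≤ ε) (hδ : 0 ≤ δ)
    (A B : H →L[ℂ] H)
    (hA : A ∈ unitary (H →L[ℂ] H)) (hB : B ∈ unitary (H →L[ℂ] H))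
    (ψ : H) (hψ : ‖ψ‖ = 1)
    (h1 : 1 - ε ≤ (inner ℂ ψ (A ψ) : ℂ).re)
    (h2 : 1 - δ ≤ (inner ℂ ψ (B ψ) : ℂ).re) :
    1 - (Real.sqrt ε + Real.sqrt δ) ^ 2 ≤ (inner ℂ ψ ((A * B) ψ) : ℂ).re :=
  stmt10_general ε δ A B hA hB ψ hψ h1 h2
end

section
/- Let ψ ∈ H_A ⊗ H_B be a unit vector, A a self-adjoint unitary on H_A, and E an operator on H_A of the form E = E⁺ − E⁻ with orthogonal projections E⁺, E⁻ satisfying E⁺ + E⁻ = I. Suppose ⟨ψ, (AEA*E* ⊗ I)ψ⟩ ≥ 1 − ε with ε ≥ 0 and (E⁻ ⊗ I)ψ ≠ 0, and set φ := (E⁻ ⊗ I)ψ / ‖(E⁻ ⊗ I)ψ‖. If moreover ⟨φ, (AEA*E* ⊗ I)φ⟩ ≥ 1 − ε/‖(E⁻ ⊗ I)ψ‖², then ⟨φ, (AE⁻A*E⁻ ⊗ I)φ⟩ ≥ 1 − (3/4)·ε/‖(E⁻ ⊗ I)ψ‖². -/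
open Kronecker

lemma act_apply {ι κ : Type*} [Fintype ι] (M : Matrix κ ι ℂ) (x : EuclideanSpace ℂ ι) (k : κ) :
    act M x k = ∑ j, M k j * x j := rfl

lemma act_mul {ι : Type*} [Fintype ι] (M N : Matrix ι ι ℂ) (x : EuclideanSpace ℂ ι) :
    act (M * N) x = act M (act N x) := by
  ext k
  simp [act_apply, Matrix.mul_apply, Finset.sum_mul, Finset.mul_sum]
  rw [Finset.sum_comm]
  congr 1; ext j; congr 1; ext i; ring

lemma act_add {ι κ : Type*} [Fintype ι] (M N : Matrix κ ι ℂ) (x : EuclideanSpace ℂ ι) :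
    act (M + N) x = act M x + act N x := by
  ext k
  simp [act_apply, PiLp.add_apply, add_mul, Finset.sum_add_distrib]

lemma act_one {ι : Type*} [Fintype ι] [DecidableEq ι] (x : EuclideanSpace ℂ ι) :
    act (1 : Matrix ι ι ℂ) x = x := by
  ext k
  simp [act_apply, Matrix.one_apply]

lemma act_smul {ι κ : Type*} [Fintype ι] (M : Matrix κ ι ℂ) (r : ℝ) (x : EuclideanSpace ℂ ι) :
    act M (r • x) = r • act M x := by
  ext k
  simp [act_apply, PiLp.smul_apply, Finset.mul_sum, Complex.real_smul]
  congr 1; ext j; ring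

/-- `A` a self-adjoint unitary, `E = E⁺ − E⁻` with orthogonal projections
`E⁺ + E⁻ = I` (so `‖E‖ ≤ 1`), and `ψ` a unit vector with
`⟨ψ, (AEA*E* ⊗ I)ψ⟩ ≥ 1 − ε`, `(E⁻ ⊗ I)ψ ≠ 0`; set `φ := (E⁻ ⊗ I)ψ / ‖(E⁻ ⊗ I)ψ‖`.
If moreover `⟨φ, (AEA*E* ⊗ I)φ⟩ ≥ 1 − ε/‖(E⁻ ⊗ I)ψ‖²`, then
`⟨φ, (AE⁻A*E⁻ ⊗ I)φ⟩ ≥ 1 − (3/4)·ε/‖(E⁻ ⊗ I)ψ‖²`. -/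
theorem stmt13 {m n : ℕ} (ε : ℝ) (hε : 0 ≤ ε)
    (A E Ep Em : Matrix (Fin m) (Fin m) ℂ)
    (hA : A.IsHermitian) (hA2 : A * A = 1)
    (hEp : Ep.IsHermitian) (hEpIdem : Ep * Ep = Ep)
    (hEm : Em.IsHermitian) (hEmIdem : Em * Em = Em)
    (hsum : Ep + Em = 1) (hspec : E = Ep - Em)
    (hEnorm : ∀ x : EuclideanSpace ℂ (Fin m), ‖act E x‖ ≤ ‖x‖)
    (ψ : EuclideanSpace ℂ (Fin m × Fin n)) (hψ : ‖ψ‖ = 1)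
    (h : 1 - ε ≤
      (inner ℂ ψ (act ((A * E * star A * star E) ⊗ₖ (1 : Matrix (Fin n) (Fin n) ℂ)) ψ) : ℂ).re)
    (η : EuclideanSpace ℂ (Fin m × Fin n))
    (hη : η = act (Em ⊗ₖ (1 : Matrix (Fin n) (Fin n) ℂ)) ψ) (hη0 : η ≠ 0)
    (φ : EuclideanSpace ℂ (Fin m × Fin n)) (hφ : φ = (‖η‖⁻¹ : ℝ) • η)
    (hφrel : 1 - ε / ‖η‖ ^ 2 ≤
      (inner ℂ φ (act ((A * E * star A * star E) ⊗ₖ (1 : Matrix (Fin n) (Fin n) ℂ)) φ) : ℂ).re) :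
    1 - (3 / 4) * ε / ‖η‖ ^ 2 ≤
      (inner ℂ φ (act ((A * Em * star A * Em) ⊗ₖ (1 : Matrix (Fin n) (Fin n) ℂ)) φ) : ℂ).re := by
  have hstarA : star A = A := hA
  have hstarE : star E = E := by
    rw [hspec]; exact (hEp.sub hEm)
  rw [hstarA, hstarE] at hφrel
  rw [hstarA]
  -- E = 1 - Em - Em
  have hE : E = 1 - Em - Em := by
    rw [hspec, ← hsum]; abel
  -- matrix identity (additions only)
  have h1 : A * E * A = A * A - (A * Em * A + A * Em * A) := by
    rw [hE]; noncomm_ring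
  rw [hA2] at h1
  set B := A * Em * A with hB
  set R := A * Em * A * Em with hR
  have hX : A * E * A * E + ((Em + Em) + (B + B)) = 1 + (R + R + R + R) := by
    rw [h1, hE, hB, hR]; noncomm_ring
  -- norms
  have hηn : (0 : ℝ) < ‖η‖ := norm_pos_iff.mpr hη0
  have hφn : ‖φ‖ = 1 := by
    rw [hφ, norm_smul]
    simp [abs_of_nonneg hηn.le, inv_mul_cancel₀ hηn.ne']
  -- (Em ⊗ 1) φ = φ
  have hPP : (Em ⊗ₖ (1 : Matrix (Fin n) (Fin n) ℂ)) * (Em ⊗ₖ 1) = Em ⊗ₖ 1 := by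
    rw [← Matrix.mul_kronecker_mul, hEmIdem, one_mul]
  have hPφ : act (Em ⊗ₖ (1 : Matrix (Fin n) (Fin n) ℂ)) φ = φ := by
    rw [hφ, hη, act_smul, ← act_mul, hPP]
  -- ⟨φ, (Em⊗1)φ⟩ = 1
  have hinner_Em : (inner ℂ φ (act (Em ⊗ₖ (1 : Matrix (Fin n) (Fin n) ℂ)) φ) : ℂ) = 1 := by
    rw [hPφ, inner_self_eq_norm_sq_to_K, hφn]
    norm_num
  -- ⟨φ, (B⊗1)φ⟩ = ⟨φ, (R⊗1)φ⟩
  have hQR : (inner ℂ φ (act (R ⊗ₖ (1 : Matrix (Fin n) (Fin n) ℂ)) φ) : ℂ)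
      = inner ℂ φ (act (B ⊗ₖ (1 : Matrix (Fin n) (Fin n) ℂ)) φ) := by
    have : (R ⊗ₖ (1 : Matrix (Fin n) (Fin n) ℂ))
        = (B ⊗ₖ (1 : Matrix (Fin n) (Fin n) ℂ)) * (Em ⊗ₖ 1) := by
      rw [← Matrix.mul_kronecker_mul, one_mul, hR, hB]
    rw [this, act_mul, hPφ]
  -- apply f := fun M => ⟨φ, act (M⊗1) φ⟩ to hX
  have key : (inner ℂ φ (act ((A * E * A * E) ⊗ₖ (1 : Matrix (Fin n) (Fin n) ℂ)) φ) : ℂ)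
      + ((1 + 1) + ((inner ℂ φ (act (B ⊗ₖ 1) φ) : ℂ) + inner ℂ φ (act (B ⊗ₖ 1) φ)))
      = 1 + ((inner ℂ φ (act (R ⊗ₖ 1) φ) : ℂ) + inner ℂ φ (act (R ⊗ₖ 1) φ)
          + inner ℂ φ (act (R ⊗ₖ 1) φ) + inner ℂ φ (act (R ⊗ₖ 1) φ)) := by
    have := congrArg (fun M : Matrix (Fin (m)) (Fin m) ℂ =>
      (inner ℂ φ (act (M ⊗ₖ (1 : Matrix (Fin n) (Fin n) ℂ)) φ) : ℂ)) hX
    simpa [Matrix.add_kronecker, act_add, inner_add_right, act_one,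
      Matrix.one_kronecker_one, hinner_Em,
      inner_self_eq_norm_sq_to_K, hφn] using this
  have keyRe := congrArg Complex.re key
  simp only [Complex.add_re, Complex.one_re] at keyRe
  set t : ℝ := (inner ℂ φ (act ((A * Em * A * Em) ⊗ₖ (1 : Matrix (Fin n) (Fin n) ℂ)) φ) : ℂ).re
    with ht
  have hRt : (inner ℂ φ (act (R ⊗ₖ (1 : Matrix (Fin n) (Fin n) ℂ)) φ) : ℂ).re = t := by
    rw [hR, ht]
  have hBt : (inner ℂ φ (act (B ⊗ₖ (1 : Matrix (Fin n) (Fin n) ℂ)) φ) : ℂ).re = t := by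
    rw [← hQR, hRt]
  rw [hBt] at keyRe
  have hx : 0 ≤ ε / ‖η‖ ^ 2 := by positivity
  have hx2 : (3 / 4) * ε / ‖η‖ ^ 2 = (3/4) * (ε / ‖η‖ ^ 2) := by ring
  rw [hx2]
  linarith [hφrel, keyRe]
end
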